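/- Substitution lemma for LSkG: given a context T[·] and a derivation of A | ⊢ B in LSkG, there exists a derivation of T[A]* | ⊢ T[B]*, where T* is the function turning a tree into a formula by replacing commas with ⊗ and the empty tree with I. -/

import Mathlib

/-- Formulae of left skew monoidal closed logic: atoms, unit I, ⊗, ⊸. -/
inductive Fma : Type
  | atom : ℕ → Fma
  | I : Fma
  | tens : Fma → Fma → Fma
  | lolli : Fma → Fma → Fma

/-- Derivability in the stoup sequent calculus LSkG: `GDer S Γ A` means `S | Γ ⊢ A`. -/
inductive GDer : Option Fma → List Fma → Fma → Prop
  | ax {A} : GDer (some A) [] A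
  | lolliL {A B C Γ Δ} : GDer none Γ A → GDer (some B) Δ C →
      GDer (some (Fma.lolli A B)) (Γ ++ Δ) C
  | IL {Γ C} : GDer none Γ C → GDer (some Fma.I) Γ C
  | tensL {A B Γ C} : GDer (some A) (B :: Γ) C → GDer (some (Fma.tens A B)) Γ C
  | pass {A Γ C} : GDer (some A) Γ C → GDer none (A :: Γ) C
  | lolliR {S Γ A B} : GDer S (Γ ++ [A]) B → GDer S Γ (Fma.lolli A B)
  | IR : GDer none [] Fma.I
  | tensR {S Γ Δ A B} : GDer S Γ A → GDer none Δ B → GDer S (Γ ++ Δ) (Fma.tens A B)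

/-- Trees: formulae, the empty tree, and pairing. -/
inductive Tr : Type
  | fma : Fma → Tr
  | emp : Tr
  | pair : Tr → Tr → Tr

/-- Contexts: trees with a single hole. -/
inductive Ctx : Type
  | hole : Ctx
  | pairL : Ctx → Tr → Ctx
  | pairR : Tr → Ctx → Ctx

/-- Substitution of a tree into the hole of a context. -/
def plug : Ctx → Tr → Tr
  | Ctx.hole, U => U
  | Ctx.pairL C T, U => Tr.pair (plug C U) T
  | Ctx.pairR T C, U => Tr.pair T (plug C U)

/-- Derivability in the tree sequent calculus LSkT: `TDer T A` means `T ⊢ A`. -/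
inductive TDer : Tr → Fma → Prop
  | ax {A} : TDer (Tr.fma A) A
  | IL {T C} : TDer (plug T Tr.emp) C → TDer (plug T (Tr.fma Fma.I)) C
  | IR : TDer Tr.emp Fma.I
  | tensL {T A B C} : TDer (plug T (Tr.pair (Tr.fma A) (Tr.fma B))) C →
      TDer (plug T (Tr.fma (Fma.tens A B))) C
  | tensR {T U A B} : TDer T A → TDer U B → TDer (Tr.pair T U) (Fma.tens A B)
  | lolliL {T U A B C} : TDer U A → TDer (plug T (Tr.fma B)) C →
      TDer (plug T (Tr.pair (Tr.fma (Fma.lolli A B)) U)) C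
  | lolliR {T A B} : TDer (Tr.pair T (Tr.fma A)) B → TDer T (Fma.lolli A B)
  | assoc {T U₀ U₁ U₂ C} : TDer (plug T (Tr.pair U₀ (Tr.pair U₁ U₂))) C →
      TDer (plug T (Tr.pair (Tr.pair U₀ U₁) U₂)) C
  | unitL {T U C} : TDer (plug T U) C → TDer (plug T (Tr.pair Tr.emp U)) C
  | unitR {T U C} : TDer (plug T (Tr.pair U Tr.emp)) C → TDer (plug T U) C

/-- `T*`: turn a tree into a formula, replacing commas with ⊗ and `-` with `I`. -/
def Tr.star : Tr → Fma
  | Tr.fma A => A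
  | Tr.emp => Fma.I
  | Tr.pair T U => Fma.tens T.star U.star

theorem GDer.tens_map {A A' B B' : Fma} (f : GDer (some A) [] A') (g : GDer (some B) [] B') :
    GDer (some (Fma.tens A B)) [] (Fma.tens A' B') :=
  GDer.tensL (GDer.tensR f (GDer.pass g))

/-- Substitution lemma: from `A | ⊢ B` one obtains `T[A]* | ⊢ T[B]*`. -/
theorem subst_lemma (T : Ctx) (A B : Fma) (f : GDer (some A) [] B) :
    GDer (some (plug T (Tr.fma A)).star) [] (plug T (Tr.fma B)).star := by
  induction T with
  | hole => exact f
  | pairL C U ih => exact GDer.tens_map ih GDer.ax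
  | pairR U C ih => exact GDer.tens_map GDer.ax ih
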